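/- Bound on the derivative of the MoM map (core estimate of Lemma 6). Let I be a finite index set of cardinality N ≥ 1 and fix 1 ≤ q ≤ p and 0 < ε0 ≤ ε1. Suppose g_j(X_i,·), g_k(X_i,·) are twice continuously differentiable on {|β̃ − β| ≤ ε1} with sup_{|β̃−β|≤ε1} |(∂/∂β)g_j(X_i,β̃)| ≤ L1 (and likewise for g_k) and sup_{|β̃−β|≤ε1} ‖(∂²/∂β∂β')g_j(X_i,β̃)‖ ≤ L2, that N^{-1} Σ_{i∈I} (1 + s_{ij}) |Y_{ik} − μ_{ik}| ≤ ε0^{-1/2}, and that | N^{-1} Σ_{i∈I} (∂μ_{ij}/∂β_q)(Y_{ik} − μ_{ik}) | ≤ ε0^{1/2}, where μ_{ij} = g_j(X_i,β), μ_{ik} = g_k(X_i,β) and s_{ij} := sup_{|β̃−β|≤ε1} |(∂/∂β)g_j(X_i,β̃)|. Then for any β̂ with |β̂ − β| ≤ ε0, | N^{-1} Σ_{i∈I} (∂g_j/∂β_q)(X_i,β̂) · (Y_{ik} − g_k(X_i,β̂)) | ≤ L1² ε0 + (L2 + 1) ε0^{1/2}. -/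

import Mathlib

open Metric

/-!
Split `I₁` at the true parameter `β`:
`G(β̂)(Y − g(β̂)) = G(β)(Y − g(β)) + (G(β̂) − G(β))(Y − g(β)) + G(β̂)(g(β) − g(β̂))`.
The first average is controlled by assumption. By the mean value theorem the gradient moves by
at most `L₂ ε₀` and the mean by at most `L₁ ε₀` over `|β̂ − β| ≤ ε₀`, so the second average is at
most `L₂ ε₀ · ε₀^{-1/2}` and the third at most `L₁ · L₁ ε₀`.
-/

section Averages

variable {ι : Type*} (I : Finset ι) {f w : ι → ℝ} {c : ℝ}

lemma abs_inv_card_mul_sum_le (h : ∀ i ∈ I, |f i| ≤ c * w i) :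
    |(I.card : ℝ)⁻¹ * ∑ i ∈ I, f i| ≤ c * ((I.card : ℝ)⁻¹ * ∑ i ∈ I, w i) := by
  have hN : (0 : ℝ) ≤ (I.card : ℝ)⁻¹ := by positivity
  calc |(I.card : ℝ)⁻¹ * ∑ i ∈ I, f i|
      ≤ (I.card : ℝ)⁻¹ * ∑ i ∈ I, |f i| := by
        rw [abs_mul, abs_of_nonneg hN]
        exact mul_le_mul_of_nonneg_left (Finset.abs_sum_le_sum_abs _ _) hN
    _ ≤ (I.card : ℝ)⁻¹ * ∑ i ∈ I, c * w i := by gcongr with i hi; exact h i hi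
    _ = c * ((I.card : ℝ)⁻¹ * ∑ i ∈ I, w i) := by rw [← Finset.mul_sum]; ring

lemma abs_inv_card_mul_sum_mul_le {a b : ι → ℝ} (hc : 0 ≤ c) (ha : ∀ i ∈ I, |a i| ≤ c)
    (hb : ∀ i ∈ I, |b i| ≤ w i) :
    |(I.card : ℝ)⁻¹ * ∑ i ∈ I, a i * b i| ≤ c * ((I.card : ℝ)⁻¹ * ∑ i ∈ I, w i) :=
  abs_inv_card_mul_sum_le I fun i hi ↦
    (abs_mul (a i) (b i)).trans_le (mul_le_mul (ha i hi) (hb i hi) (abs_nonneg _) hc)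

variable {I}

lemma abs_inv_card_mul_sum_le_of_abs_le (hI : I.Nonempty) (h : ∀ i ∈ I, |f i| ≤ c) :
    |(I.card : ℝ)⁻¹ * ∑ i ∈ I, f i| ≤ c := by
  have hcard : (I.card : ℝ) ≠ 0 := by exact_mod_cast hI.card_pos.ne'
  simpa [hcard] using abs_inv_card_mul_sum_le I (w := fun _ ↦ 1) (by simpa using h)

end Averages

lemma Convex.abs_image_sub_le_of_norm_hasGradientAt_le {F : Type*} [NormedAddCommGroup F]
    [InnerProductSpace ℝ F] [CompleteSpace F] {f : F → ℝ} {f' : F → F} {s : Set F} {x y : F}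
    {C : ℝ} (hs : Convex ℝ s) (hf : ∀ x ∈ s, HasGradientAt f (f' x) x)
    (bound : ∀ x ∈ s, ‖f' x‖ ≤ C) (hx : x ∈ s) (hy : y ∈ s) :
    |f y - f x| ≤ C * ‖y - x‖ :=
  hs.norm_image_sub_le_of_norm_hasFDerivWithin_le
    (fun z hz ↦ (hf z hz).hasFDerivAt.hasFDerivWithinAt)
    (fun z hz ↦ by simpa using bound z hz) hx hy

theorem mom_map_derivative_bound_general
    {ι : Type*} {p : ℕ} (I : Finset ι) (hI : I.Nonempty) (q : Fin p)
    (β : EuclideanSpace ℝ (Fin p)) (ε₀ ε₁ L₁ L₂ : ℝ)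
    (hε₀ : 0 < ε₀) (hε₀₁ : ε₀ ≤ ε₁)
    (gk : ι → EuclideanSpace ℝ (Fin p) → ℝ)
    -- gradients of g_j(X_i,·), g_k(X_i,·)
    (Gj Gk : ι → EuclideanSpace ℝ (Fin p) → EuclideanSpace ℝ (Fin p))
    -- second derivative of g_j(X_i,·) (derivative of the gradient)
    (Hj : ι → EuclideanSpace ℝ (Fin p) →
      (EuclideanSpace ℝ (Fin p) →L[ℝ] EuclideanSpace ℝ (Fin p)))
    (sj : ι → ℝ)
    (Yk : ι → ℝ)
    (hGk : ∀ i ∈ I, ∀ x ∈ closedBall β ε₁, HasGradientAt (gk i) (Gk i x) x)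
    (hHj : ∀ i ∈ I, ∀ x ∈ closedBall β ε₁, HasFDerivAt (Gj i) (Hj i x) x)
    -- first-derivative bounds: s_{ij} ≤ L₁ (and likewise for g_k)
    (hsj : ∀ i ∈ I, ∀ x ∈ closedBall β ε₁, ‖Gj i x‖ ≤ sj i)
    (hsjL : ∀ i ∈ I, sj i ≤ L₁)
    (hskL : ∀ i ∈ I, ∀ x ∈ closedBall β ε₁, ‖Gk i x‖ ≤ L₁)
    -- second-derivative bound
    (hL₂ : ∀ i ∈ I, ∀ x ∈ closedBall β ε₁, ‖Hj i x‖ ≤ L₂)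
    -- assumed average bounds (events B2 and B5)
    (havg : (I.card : ℝ)⁻¹ * ∑ i ∈ I, (1 + sj i) * |Yk i - gk i β| ≤ (Real.sqrt ε₀)⁻¹)
    (hB5 : |(I.card : ℝ)⁻¹ * ∑ i ∈ I, (Gj i β) q * (Yk i - gk i β)| ≤ Real.sqrt ε₀) :
    ∀ βh : EuclideanSpace ℝ (Fin p), ‖βh - β‖ ≤ ε₀ →
      |(I.card : ℝ)⁻¹ * ∑ i ∈ I, (Gj i βh) q * (Yk i - gk i βh)|
        ≤ L₁ ^ 2 * ε₀ + (L₂ + 1) * Real.sqrt ε₀ := by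
  intro βh hβh
  have hβ : β ∈ closedBall β ε₁ := mem_closedBall_self (hε₀.le.trans hε₀₁)
  have hβh' : βh ∈ closedBall β ε₁ := mem_closedBall_iff_norm.mpr (hβh.trans hε₀₁)
  obtain ⟨i₀, hi₀⟩ := id hI
  have hL₁_nonneg : 0 ≤ L₁ := (norm_nonneg _).trans (hskL i₀ hi₀ β hβ)
  have hL₂_nonneg : 0 ≤ L₂ := (norm_nonneg _).trans (hL₂ i₀ hi₀ β hβ)
  have hgrad : ∀ i ∈ I, |Gj i βh q - Gj i β q| ≤ L₂ * ε₀ := fun i hi ↦ calc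
    _ ≤ ‖Gj i βh - Gj i β‖ := PiLp.norm_apply_le (Gj i βh - Gj i β) q
    _ ≤ L₂ * ‖βh - β‖ := (convex_closedBall β ε₁).norm_image_sub_le_of_norm_hasFDerivWithin_le
          (fun x hx ↦ (hHj i hi x hx).hasFDerivWithinAt) (hL₂ i hi) hβ hβh'
    _ ≤ L₂ * ε₀ := by gcongr
  have hmean : ∀ i ∈ I, |gk i β - gk i βh| ≤ L₁ * ε₀ := fun i hi ↦ calc
    _ ≤ L₁ * ‖β - βh‖ := (convex_closedBall β ε₁).abs_image_sub_le_of_norm_hasGradientAt_le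
          (hGk i hi) (hskL i hi) hβh' hβ
    _ ≤ L₁ * ε₀ := by rw [norm_sub_rev]; gcongr
  have hI₁₂ : |(I.card : ℝ)⁻¹ * ∑ i ∈ I, (Gj i βh q - Gj i β q) * (Yk i - gk i β)|
      ≤ L₂ * Real.sqrt ε₀ := calc
    _ ≤ L₂ * ε₀ * ((I.card : ℝ)⁻¹ * ∑ i ∈ I, (1 + sj i) * |Yk i - gk i β|) :=
        abs_inv_card_mul_sum_mul_le I (by positivity) hgrad fun i hi ↦
          le_mul_of_one_le_left (abs_nonneg _) (by linarith [(norm_nonneg _).trans (hsj i hi β hβ)])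
    _ ≤ L₂ * ε₀ * (Real.sqrt ε₀)⁻¹ := by gcongr
    _ = L₂ * Real.sqrt ε₀ := by rw [mul_assoc, ← div_eq_mul_inv, Real.div_sqrt]
  have hI₁₃ : |(I.card : ℝ)⁻¹ * ∑ i ∈ I, Gj i βh q * (gk i β - gk i βh)| ≤ L₁ * (L₁ * ε₀) :=
    abs_inv_card_mul_sum_le_of_abs_le hI fun i hi ↦ (abs_mul _ _).trans_le <|
      mul_le_mul ((PiLp.norm_apply_le (Gj i βh) q).trans ((hsj i hi βh hβh').trans (hsjL i hi)))
        (hmean i hi) (abs_nonneg _) hL₁_nonneg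
  have hsplit : ∑ i ∈ I, Gj i βh q * (Yk i - gk i βh) = ∑ i ∈ I, Gj i β q * (Yk i - gk i β)
      + ∑ i ∈ I, (Gj i βh q - Gj i β q) * (Yk i - gk i β)
      + ∑ i ∈ I, Gj i βh q * (gk i β - gk i βh) := by
    simp only [← Finset.sum_add_distrib]
    exact Finset.sum_congr rfl fun i _ ↦ by ring
  rw [hsplit, mul_add, mul_add]
  calc _ ≤ _ := abs_add_three _ _ _
    _ ≤ Real.sqrt ε₀ + L₂ * Real.sqrt ε₀ + L₁ * (L₁ * ε₀) := by gcongr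
    _ = L₁ ^ 2 * ε₀ + (L₂ + 1) * Real.sqrt ε₀ := by ring

theorem mom_map_derivative_bound
    {ι : Type*} {p : ℕ} (I : Finset ι) (hI : I.Nonempty) (q : Fin p)
    (β : EuclideanSpace ℝ (Fin p)) (ε₀ ε₁ L₁ L₂ : ℝ)
    (hε₀ : 0 < ε₀) (hε₀₁ : ε₀ ≤ ε₁)
    (gj gk : ι → EuclideanSpace ℝ (Fin p) → ℝ)
    -- gradients of g_j(X_i,·), g_k(X_i,·)
    (Gj Gk : ι → EuclideanSpace ℝ (Fin p) → EuclideanSpace ℝ (Fin p))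
    -- second derivative of g_j(X_i,·) (derivative of the gradient)
    (Hj : ι → EuclideanSpace ℝ (Fin p) →
      (EuclideanSpace ℝ (Fin p) →L[ℝ] EuclideanSpace ℝ (Fin p)))
    (sj : ι → ℝ)
    (Yj Yk : ι → ℝ)
    (hGj : ∀ i ∈ I, ∀ x ∈ closedBall β ε₁, HasGradientAt (gj i) (Gj i x) x)
    (hGk : ∀ i ∈ I, ∀ x ∈ closedBall β ε₁, HasGradientAt (gk i) (Gk i x) x)
    (hHj : ∀ i ∈ I, ∀ x ∈ closedBall β ε₁, HasFDerivAt (Gj i) (Hj i x) x)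
    -- first-derivative bounds: s_{ij} ≤ L₁ (and likewise for g_k)
    (hsj : ∀ i ∈ I, ∀ x ∈ closedBall β ε₁, ‖Gj i x‖ ≤ sj i)
    (hsjL : ∀ i ∈ I, sj i ≤ L₁)
    (hskL : ∀ i ∈ I, ∀ x ∈ closedBall β ε₁, ‖Gk i x‖ ≤ L₁)
    -- second-derivative bound
    (hL₂ : ∀ i ∈ I, ∀ x ∈ closedBall β ε₁, ‖Hj i x‖ ≤ L₂)
    -- assumed average bounds (events B2 and B5)
    (havg : (I.card : ℝ)⁻¹ * ∑ i ∈ I, (1 + sj i) * |Yk i - gk i β| ≤ (Real.sqrt ε₀)⁻¹)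
    (hB5 : |(I.card : ℝ)⁻¹ * ∑ i ∈ I, (Gj i β) q * (Yk i - gk i β)| ≤ Real.sqrt ε₀) :
    ∀ βh : EuclideanSpace ℝ (Fin p), ‖βh - β‖ ≤ ε₀ →
      |(I.card : ℝ)⁻¹ * ∑ i ∈ I, (Gj i βh) q * (Yk i - gk i βh)|
        ≤ L₁ ^ 2 * ε₀ + (L₂ + 1) * Real.sqrt ε₀ :=
  mom_map_derivative_bound_general I hI q β ε₀ ε₁ L₁ L₂ hε₀ hε₀₁ gk Gj Gk Hj sj Yk hGk hHj hsj hsjL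
    hskL hL₂ havg hB5
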